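/- arXiv:2301.02434 — 3 statements merged into one kernel-verified Lean document; each statement's English description precedes it below -/
import Mathlib

section
/- If every entry of an n×n nonnegative matrix function M(θ) is a log-convex function of θ ∈ ℝ (where zero entries are allowed, interpreted as log-convex), then θ ↦ spr(M(θ)) is log-convex, hence convex. -/
open Matrix

/-- Spectral radius of a real square matrix. -/
noncomputable def Matrix.sprad {s : ℕ} (A : Matrix (Fin s) (Fin s) ℝ) : ℝ :=
  sSup ((fun (μ : ℂ) => ‖μ‖) '' spectrum ℂ (A.map Complex.ofReal))

/-!
Kingman's argument. By Hölder's inequality, the entrywise bound `A ≤ B ^ λ * C ^ (1 - λ)` between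
nonnegative matrices survives matrix multiplication, hence passes to all powers `A ^ k`, and then
to their max-row-sum norms. Taking `k`-th roots and letting `k → ∞`, Gelfand's formula turns it
into `spr A ≤ spr B ^ λ * spr C ^ (1 - λ)`. Convexity follows from the weighted AM-GM inequality.
-/

open Filter Topology

attribute [local instance] Matrix.linftyOpSeminormedAddCommGroup Matrix.linftyOpNormedRing
  Matrix.linftyOpNormedAlgebra

theorem Real.sum_rpow_mul_rpow_le {ι : Type*} (s : Finset ι) {f g : ι → ℝ} {l : ℝ}
    (hl₀ : 0 ≤ l) (hl₁ : l ≤ 1) (hf : ∀ i ∈ s, 0 ≤ f i) (hg : ∀ i ∈ s, 0 ≤ g i) :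
    ∑ i ∈ s, f i ^ l * g i ^ (1 - l) ≤ (∑ i ∈ s, f i) ^ l * (∑ i ∈ s, g i) ^ (1 - l) := by
  rcases hl₀.eq_or_lt with rfl | hl₀
  · simp
  rcases hl₁.eq_or_lt with rfl | hl₁
  · simp
  have hpq : Real.HolderConjugate l⁻¹ (1 - l)⁻¹ :=
    Real.holderConjugate_iff.mpr ⟨(one_lt_inv₀ hl₀).mpr hl₁, by simp⟩
  have h := Real.inner_le_Lp_mul_Lq_of_nonneg s hpq
    (fun i hi => Real.rpow_nonneg (hf i hi) l) (fun i hi => Real.rpow_nonneg (hg i hi) (1 - l))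
  rwa [Finset.sum_congr rfl fun i hi => Real.rpow_rpow_inv (hf i hi) hl₀.ne',
    Finset.sum_congr rfl fun i hi => Real.rpow_rpow_inv (hg i hi) (sub_pos.mpr hl₁).ne',
    one_div, one_div, inv_inv, inv_inv] at h

theorem spectralRadius_eq_ofReal_sSup {𝕜 A : Type*} [NormedField 𝕜] [ProperSpace 𝕜]
    [NormedRing A] [NormedAlgebra 𝕜 A] [CompleteSpace A] (a : A) :
    spectralRadius 𝕜 a = ENNReal.ofReal (sSup (norm '' spectrum 𝕜 a)) := by
  rcases (spectrum 𝕜 a).eq_empty_or_nonempty with h | h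
  · simp [spectralRadius, h]
  obtain ⟨k, hk, hk_eq⟩ := spectrum.exists_nnnorm_eq_spectralRadius_of_nonempty h
  have hmax : IsGreatest (norm '' spectrum 𝕜 a) ‖k‖ := by
    refine ⟨⟨k, hk, rfl⟩, ?_⟩
    rintro _ ⟨μ, hμ, rfl⟩
    have : (‖μ‖₊ : ENNReal) ≤ ‖k‖₊ := hk_eq ▸ le_iSup₂ (α := ENNReal) μ hμ
    exact_mod_cast this
  rw [hmax.csSup_eq, ← hk_eq, ofReal_norm, enorm_eq_nnnorm]

theorem tendsto_norm_pow_rpow_sSup_norm_spectrum {A : Type*} [NormedRing A] [NormedAlgebra ℂ A]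
    [CompleteSpace A] (a : A) :
    Tendsto (fun k : ℕ => ‖a ^ k‖ ^ (1 / k : ℝ)) atTop (𝓝 (sSup (norm '' spectrum ℂ a))) := by
  have h := spectrum.pow_norm_pow_one_div_tendsto_nhds_spectralRadius a
  rw [spectralRadius_eq_ofReal_sSup] at h
  have hsup : 0 ≤ sSup (norm '' spectrum ℂ a) :=
    Real.sSup_nonneg <| by rintro _ ⟨μ, -, rfl⟩; exact norm_nonneg μ
  have h' := (ENNReal.tendsto_toReal ENNReal.ofReal_ne_top).comp h
  rw [ENNReal.toReal_ofReal hsup] at h'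
  exact h'.congr fun k => ENNReal.toReal_ofReal (by positivity)

namespace Matrix

section NonnegMatrices

variable {m n o : Type*} [Fintype n] {l : ℝ}

theorem mul_apply_le_rpow_mul_rpow {A B C : Matrix m n ℝ} {A' B' C' : Matrix n o ℝ}
    (hl₀ : 0 ≤ l) (hl₁ : l ≤ 1)
    (hB : ∀ i j, 0 ≤ B i j) (hC : ∀ i j, 0 ≤ C i j)
    (hA' : ∀ i j, 0 ≤ A' i j) (hB' : ∀ i j, 0 ≤ B' i j) (hC' : ∀ i j, 0 ≤ C' i j)
    (h : ∀ i j, A i j ≤ B i j ^ l * C i j ^ (1 - l))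
    (h' : ∀ i j, A' i j ≤ B' i j ^ l * C' i j ^ (1 - l)) (i : m) (k : o) :
    (A * A') i k ≤ (B * B') i k ^ l * (C * C') i k ^ (1 - l) := by
  simp only [mul_apply]
  calc ∑ j, A i j * A' j k
      ≤ ∑ j, (B i j * B' j k) ^ l * (C i j * C' j k) ^ (1 - l) := by
        gcongr ∑ j, ?_ with j
        calc A i j * A' j k
            ≤ (B i j ^ l * C i j ^ (1 - l)) * (B' j k ^ l * C' j k ^ (1 - l)) :=
              mul_le_mul (h i j) (h' j k) (hA' j k)
                (mul_nonneg (Real.rpow_nonneg (hB i j) _) (Real.rpow_nonneg (hC i j) _))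
          _ = (B i j * B' j k) ^ l * (C i j * C' j k) ^ (1 - l) := by
              rw [Real.mul_rpow (hB i j) (hB' j k), Real.mul_rpow (hC i j) (hC' j k)]
              ring
    _ ≤ _ := Real.sum_rpow_mul_rpow_le _ hl₀ hl₁
        (fun j _ => mul_nonneg (hB i j) (hB' j k)) (fun j _ => mul_nonneg (hC i j) (hC' j k))

variable [DecidableEq n]

theorem pow_apply_le_rpow_mul_rpow {A B C : Matrix n n ℝ} (hl₀ : 0 ≤ l) (hl₁ : l ≤ 1)
    (hA : ∀ i j, 0 ≤ A i j) (hB : ∀ i j, 0 ≤ B i j) (hC : ∀ i j, 0 ≤ C i j)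
    (h : ∀ i j, A i j ≤ B i j ^ l * C i j ^ (1 - l)) (k : ℕ) (i j : n) :
    (A ^ k) i j ≤ (B ^ k) i j ^ l * (C ^ k) i j ^ (1 - l) := by
  induction k generalizing i j with
  | zero =>
    rcases eq_or_ne i j with rfl | hij
    · simp
    · simp only [pow_zero, one_apply_ne hij]
      positivity
  | succ k ih =>
    simp only [pow_succ]
    exact mul_apply_le_rpow_mul_rpow hl₀ hl₁ (pow_apply_nonneg hB k)
      (pow_apply_nonneg hC k) hA hB hC ih h i j

end NonnegMatrices

section LinftyOpNorm

variable {m n α : Type*} [Fintype m] [Fintype n] [SeminormedAddCommGroup α]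

theorem linfty_opNorm_le_iff {A : Matrix m n α} {r : ℝ} (hr : 0 ≤ r) :
    ‖A‖ ≤ r ↔ ∀ i, ∑ j, ‖A i j‖ ≤ r := by
  change ‖fun i => WithLp.toLp 1 (A i)‖ ≤ r ↔ _
  simp [pi_norm_le_iff_of_nonneg hr, PiLp.norm_eq_of_L1]

theorem sum_norm_le_linfty_opNorm (A : Matrix m n α) (i : m) : ∑ j, ‖A i j‖ ≤ ‖A‖ :=
  (linfty_opNorm_le_iff (norm_nonneg A)).mp le_rfl i

theorem linfty_opNorm_le_rpow_mul_rpow {A B C : Matrix m n ℝ} {l : ℝ} (hl₀ : 0 ≤ l) (hl₁ : l ≤ 1)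
    (hA : ∀ i j, 0 ≤ A i j) (hB : ∀ i j, 0 ≤ B i j) (hC : ∀ i j, 0 ≤ C i j)
    (h : ∀ i j, A i j ≤ B i j ^ l * C i j ^ (1 - l)) :
    ‖A‖ ≤ ‖B‖ ^ l * ‖C‖ ^ (1 - l) := by
  have hrow : ∀ {D : Matrix m n ℝ}, (∀ i j, 0 ≤ D i j) → ∀ i, ∑ j, D i j ≤ ‖D‖ :=
    fun {D} hD i => by
      simpa only [Real.norm_of_nonneg (hD i _)] using sum_norm_le_linfty_opNorm D i
  refine (linfty_opNorm_le_iff (by positivity)).mpr fun i => ?_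
  calc ∑ j, ‖A i j‖ = ∑ j, A i j := by simp only [Real.norm_of_nonneg (hA i _)]
    _ ≤ ∑ j, B i j ^ l * C i j ^ (1 - l) := Finset.sum_le_sum fun j _ => h i j
    _ ≤ (∑ j, B i j) ^ l * (∑ j, C i j) ^ (1 - l) :=
        Real.sum_rpow_mul_rpow_le _ hl₀ hl₁ (fun j _ => hB i j) (fun j _ => hC i j)
    _ ≤ ‖B‖ ^ l * ‖C‖ ^ (1 - l) := by
        have hBi : 0 ≤ ∑ j, B i j := Finset.sum_nonneg fun j _ => hB i j
        have hCi : 0 ≤ ∑ j, C i j := Finset.sum_nonneg fun j _ => hC i j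
        gcongr
        exacts [hrow hB i, hrow hC i]

end LinftyOpNorm

theorem linfty_opNorm_map_ofReal {m n : Type*} [Fintype m] [Fintype n] (A : Matrix m n ℝ) :
    ‖A.map Complex.ofReal‖ = ‖A‖ := by
  simp [linfty_opNorm_def]

variable {s : ℕ}

theorem sprad_nonneg (A : Matrix (Fin s) (Fin s) ℝ) : 0 ≤ A.sprad :=
  Real.sSup_nonneg <| by rintro _ ⟨μ, -, rfl⟩; exact norm_nonneg μ

theorem tendsto_linfty_opNorm_pow_rpow_sprad (A : Matrix (Fin s) (Fin s) ℝ) :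
    Tendsto (fun k : ℕ => ‖A ^ k‖ ^ (1 / k : ℝ)) atTop (𝓝 A.sprad) :=
  (tendsto_norm_pow_rpow_sSup_norm_spectrum (A.map Complex.ofReal)).congr fun k => by
    rw [← linfty_opNorm_map_ofReal (A ^ k)]
    exact congrArg (‖·‖ ^ (1 / k : ℝ)) (A.map_pow Complex.ofRealHom k).symm

theorem sprad_le_rpow_mul_rpow {A B C : Matrix (Fin s) (Fin s) ℝ} {l : ℝ}
    (hl₀ : 0 ≤ l) (hl₁ : l ≤ 1)
    (hA : ∀ i j, 0 ≤ A i j) (hB : ∀ i j, 0 ≤ B i j) (hC : ∀ i j, 0 ≤ C i j)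
    (h : ∀ i j, A i j ≤ B i j ^ l * C i j ^ (1 - l)) :
    A.sprad ≤ B.sprad ^ l * C.sprad ^ (1 - l) := by
  have hlim := ((tendsto_linfty_opNorm_pow_rpow_sprad B).rpow_const (.inr hl₀)).mul
    ((tendsto_linfty_opNorm_pow_rpow_sprad C).rpow_const (.inr (sub_nonneg.mpr hl₁)))
  refine le_of_tendsto_of_tendsto' (tendsto_linfty_opNorm_pow_rpow_sprad A) hlim fun k => ?_
  have hk : ‖A ^ k‖ ≤ ‖B ^ k‖ ^ l * ‖C ^ k‖ ^ (1 - l) :=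
    linfty_opNorm_le_rpow_mul_rpow hl₀ hl₁ (pow_apply_nonneg hA k) (pow_apply_nonneg hB k)
      (pow_apply_nonneg hC k) (pow_apply_le_rpow_mul_rpow hl₀ hl₁ hA hB hC h k)
  calc ‖A ^ k‖ ^ (1 / k : ℝ)
      ≤ (‖B ^ k‖ ^ l * ‖C ^ k‖ ^ (1 - l)) ^ (1 / k : ℝ) := by gcongr
    _ = (‖B ^ k‖ ^ (1 / k : ℝ)) ^ l * (‖C ^ k‖ ^ (1 / k : ℝ)) ^ (1 - l) := by
        rw [Real.mul_rpow (by positivity) (by positivity), ← Real.rpow_mul (norm_nonneg _),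
          ← Real.rpow_mul (norm_nonneg _), ← Real.rpow_mul (norm_nonneg _),
          ← Real.rpow_mul (norm_nonneg _), mul_comm l, mul_comm (1 - l)]

end Matrix

theorem convexOn_univ_of_le_rpow_mul_rpow {E : Type*} [AddCommGroup E] [Module ℝ E]
    {f : E → ℝ} (hf₀ : ∀ x, 0 ≤ f x)
    (hf : ∀ x y (l : ℝ), 0 ≤ l → l ≤ 1 → f (l • x + (1 - l) • y) ≤ f x ^ l * f y ^ (1 - l)) :
    ConvexOn ℝ Set.univ f := by
  refine ⟨convex_univ, fun x _ y _ a b ha hb hab => ?_⟩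
  obtain rfl : b = 1 - a := by linarith
  calc f (a • x + (1 - a) • y)
      ≤ f x ^ a * f y ^ (1 - a) := hf x y a ha (by linarith)
    _ ≤ a * f x + (1 - a) * f y :=
        Real.geom_mean_le_arith_mean2_weighted ha hb (hf₀ x) (hf₀ y) hab

/-- (Kingman) If every entry of a nonnegative matrix function `M(θ)` is
log-convex in `θ` (zero entries allowed, in the multiplicative-inequality
sense), then the spectral radius `θ ↦ spr(M(θ))` is log-convex, hence convex. -/
theorem stmt5 {n : ℕ} (M : ℝ → Matrix (Fin n) (Fin n) ℝ)
    (hnn : ∀ θ i j, 0 ≤ M θ i j)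
    (hlc : ∀ (i j : Fin n) (θ₁ θ₂ l : ℝ), 0 ≤ l → l ≤ 1 →
      M (l * θ₁ + (1 - l) * θ₂) i j ≤ (M θ₁ i j) ^ l * (M θ₂ i j) ^ (1 - l)) :
    (∀ (θ₁ θ₂ l : ℝ), 0 ≤ l → l ≤ 1 →
      (M (l * θ₁ + (1 - l) * θ₂)).sprad ≤
        (M θ₁).sprad ^ l * (M θ₂).sprad ^ (1 - l)) ∧
    ConvexOn ℝ Set.univ (fun θ => (M θ).sprad) := by
  have hlog : ∀ (θ₁ θ₂ l : ℝ), 0 ≤ l → l ≤ 1 →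
      (M (l * θ₁ + (1 - l) * θ₂)).sprad ≤ (M θ₁).sprad ^ l * (M θ₂).sprad ^ (1 - l) :=
    fun θ₁ θ₂ l hl₀ hl₁ => Matrix.sprad_le_rpow_mul_rpow hl₀ hl₁ (hnn _) (hnn _) (hnn _)
      fun i j => hlc i j θ₁ θ₂ l hl₀ hl₁
  exact ⟨hlog, convexOn_univ_of_le_rpow_mul_rpow (fun θ => Matrix.sprad_nonneg _) hlog⟩
end

section
/- Let G be an s×s complex matrix and α an eigenvalue whose algebraic multiplicity is ℓ. Let Λ be the sℓ×sℓ block bidiagonal matrix with diagonal blocks αI − G and superdiagonal blocks −I. Then dim Ker Λ = ℓ. -/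
/-!
With `A = αI − G`, a vector `(x₀, …, x_{ℓ-1})` lies in the kernel of `Λ` exactly when
`x_{i+1} = A xᵢ` and `A x_{ℓ-1} = 0`, i.e. when it is the truncated chain `(x₀, A x₀, …, A^{ℓ-1} x₀)`
of a vector `x₀ ∈ ker A^ℓ`. So `dim ker Λ = dim ker (G − αI)^ℓ`, and since the multiplicity `ℓ`
bounds the nilpotency index of `G − αI` on the generalized eigenspace of `α`, this kernel is the
whole generalized eigenspace, whose dimension is `ℓ`.
-/

open Matrix

/-- The `ℓ × ℓ` block bidiagonal matrix with diagonal blocks `αI − G` and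
superdiagonal blocks `−I` (all blocks of size `s × s`). -/
noncomputable def Lam (ℓ s : ℕ) (α : ℂ) (G : Matrix (Fin s) (Fin s) ℂ) :
    Matrix (Fin ℓ × Fin s) (Fin ℓ × Fin s) ℂ :=
  fun p q =>
    if (p.1 : ℕ) = (q.1 : ℕ) then (α • (1 : Matrix (Fin s) (Fin s) ℂ) - G) p.2 q.2
    else if (p.1 : ℕ) + 1 = (q.1 : ℕ) then (-(1 : Matrix (Fin s) (Fin s) ℂ)) p.2 q.2
    else 0

open Module

theorem LinearMap.IsNilpotent.pow_finrank_eq_zero {R M : Type*} [CommRing R] [IsDomain R]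
    [AddCommGroup M] [Module R M] [Module.Finite R M] [Module.Free R M] {φ : Module.End R M}
    (h : IsNilpotent φ) : φ ^ finrank R M = 0 := by
  simpa [h.charpoly_eq_X_pow_finrank] using φ.aeval_self_charpoly

theorem Module.End.genEigenspace_rootMultiplicity_eq_maxGenEigenspace {K V : Type*} [Field K]
    [AddCommGroup V] [Module K V] [FiniteDimensional K V] (f : Module.End K V) (μ : K) :
    f.genEigenspace μ (f.charpoly.rootMultiplicity μ) = f.maxGenEigenspace μ := by
  refine le_antisymm (f.genEigenspace_le_maximal μ _) fun x hx => ?_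
  -- Cayley–Hamilton for the nilpotent part on a space of dimension `rootMultiplicity`
  have hN := LinearMap.IsNilpotent.pow_finrank_eq_zero
    (f.isNilpotent_restrict_maxGenEigenspace_sub_algebraMap μ)
  rw [LinearMap.finrank_maxGenEigenspace_eq] at hN
  erw [Module.End.pow_restrict] at hN
  rw [Module.End.mem_genEigenspace_nat, LinearMap.mem_ker, ← Algebra.algebraMap_eq_smul_one]
  exact congrArg Subtype.val (LinearMap.congr_fun hN ⟨x, hx⟩)

theorem Module.End.ker_smul_one_sub_pow {K V : Type*} [Field K] [AddCommGroup V] [Module K V]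
    (f : Module.End K V) (μ : K) (k : ℕ) :
    LinearMap.ker ((μ • 1 - f) ^ k) = f.genEigenspace μ k := by
  rw [Module.End.genEigenspace_nat, ← neg_sub, ← neg_one_smul K (f - μ • 1), _root_.smul_pow,
    LinearMap.ker_smul _ _ (pow_ne_zero k (neg_ne_zero.mpr one_ne_zero))]

namespace Matrix

variable {R n : Type*} [CommRing R] [Fintype n] [DecidableEq n]

theorem ker_mulVecLin_smul_one_sub_pow {K : Type*} [Field K] (A : Matrix n n K) (μ : K) (k : ℕ) :
    LinearMap.ker ((μ • 1 - A) ^ k).mulVecLin = Module.End.genEigenspace (toLin' A) μ k := by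
  rw [← Matrix.toLin'_apply', Matrix.toLin'_pow, map_sub, map_smul, Matrix.toLin'_one,
    ← Module.End.one_eq_id, Module.End.ker_smul_one_sub_pow]

def powerChain (A : Matrix n n R) (ℓ : ℕ) : (n → R) →ₗ[R] (Fin ℓ × n → R) :=
  LinearMap.pi fun p => (LinearMap.proj p.2).comp (A ^ (p.1 : ℕ)).mulVecLin

@[simp]
theorem powerChain_apply (A : Matrix n n R) (ℓ : ℕ) (v : n → R) (p : Fin ℓ × n) :
    A.powerChain ℓ v p = (A ^ (p.1 : ℕ) *ᵥ v) p.2 :=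
  rfl

theorem powerChain_injective (A : Matrix n n R) {ℓ : ℕ} (hℓ : 0 < ℓ) :
    Function.Injective (A.powerChain ℓ) := fun v w h =>
  funext fun j => by simpa using congrFun h (⟨0, hℓ⟩, j)

end Matrix

section Lam

variable {ℓ s : ℕ} (α : ℂ) (G : Matrix (Fin s) (Fin s) ℂ)

theorem Lam_mulVec_apply (x : Fin ℓ × Fin s → ℂ) (i : Fin ℓ) (j : Fin s) :
    (Lam ℓ s α G *ᵥ x) (i, j) = ((α • 1 - G) *ᵥ fun k => x (i, k)) j -
      if h : (i : ℕ) + 1 < ℓ then x (⟨i + 1, h⟩, j) else 0 := by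
  have hblock : ∀ k : Fin ℓ, ∑ m, Lam ℓ s α G (i, j) (k, m) * x (k, m) =
      (if i = k then ((α • 1 - G) *ᵥ fun m => x (k, m)) j else 0) -
        if (i : ℕ) + 1 = k then x (k, j) else 0 := by
    intro k
    by_cases hik : i = k
    · subst hik
      simp [Lam, mulVec, dotProduct]
    · by_cases hsucc : (i : ℕ) + 1 = k
      · simp [Lam, hik, hsucc, Fin.val_ne_iff.mpr hik, Matrix.one_apply]
      · simp [Lam, hik, hsucc, Fin.val_ne_iff.mpr hik]
  have hnext : (∑ k : Fin ℓ, if (i : ℕ) + 1 = k then x (k, j) else 0) =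
      if h : (i : ℕ) + 1 < ℓ then x (⟨i + 1, h⟩, j) else 0 := by
    split_ifs with h
    · rw [Finset.sum_eq_single ⟨i + 1, h⟩ (fun k _ hk => if_neg fun he => hk (Fin.ext he.symm))
        (fun hmem => absurd (Finset.mem_univ _) hmem), if_pos rfl]
    · exact Finset.sum_eq_zero fun k _ => if_neg fun he : (i : ℕ) + 1 = k => h (he ▸ k.isLt)
  rw [mulVec, dotProduct, Fintype.sum_prod_type, Finset.sum_congr rfl fun k _ => hblock k,
    Finset.sum_sub_distrib, Finset.sum_ite_eq, if_pos (Finset.mem_univ _), hnext]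

theorem ker_mulVecLin_Lam (hℓ : 0 < ℓ) :
    LinearMap.ker (Lam ℓ s α G).mulVecLin =
      (LinearMap.ker ((α • 1 - G) ^ ℓ).mulVecLin).map ((α • 1 - G).powerChain ℓ) := by
  set A := α • 1 - G with hA
  ext x
  simp only [LinearMap.mem_ker, Matrix.mulVecLin_apply, Submodule.mem_map]
  constructor
  · intro hx
    have hstep : ∀ i j, (A *ᵥ fun k => x (i, k)) j =
        if h : (i : ℕ) + 1 < ℓ then x (⟨i + 1, h⟩, j) else 0 := fun i j =>
      sub_eq_zero.mp ((Lam_mulVec_apply α G x i j).symm.trans (congrFun hx (i, j)))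
    set v := fun j => x (⟨0, hℓ⟩, j)
    have hchain : ∀ n (h : n < ℓ), (fun j => x (⟨n, h⟩, j)) = A ^ n *ᵥ v := by
      intro n
      induction n with
      | zero => intro h; simp [v]
      | succ n ih =>
        intro h
        funext j
        rw [pow_succ', ← mulVec_mulVec, ← ih (by omega), hstep ⟨n, by omega⟩ j, dif_pos h]
    refine ⟨v, ?_, ?_⟩
    · obtain ⟨m, rfl⟩ : ∃ m, ℓ = m + 1 := ⟨ℓ - 1, by omega⟩
      funext j
      rw [pow_succ', ← mulVec_mulVec, ← hchain m (by omega), hstep ⟨m, by omega⟩ j,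
        dif_neg (by simp)]
      rfl
    · funext ⟨i, j⟩
      exact (congrFun (hchain i i.isLt) j).symm
  · rintro ⟨v, hv, rfl⟩
    funext ⟨i, j⟩
    rw [Lam_mulVec_apply, ← hA]
    simp only [powerChain_apply, mulVec_mulVec, ← pow_succ']
    split_ifs with h
    · exact sub_self _
    · rw [show (i : ℕ) + 1 = ℓ by omega, hv]
      exact sub_self _

theorem finrank_ker_mulVecLin_Lam :
    finrank ℂ (LinearMap.ker (Lam ℓ s α G).mulVecLin) =
      finrank ℂ (LinearMap.ker ((α • 1 - G) ^ ℓ).mulVecLin) := by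
  rcases Nat.eq_zero_or_pos ℓ with rfl | hℓ
  · rw [pow_zero, mulVecLin_one, LinearMap.ker_id, finrank_bot]
    exact Module.finrank_zero_of_subsingleton
  · rw [ker_mulVecLin_Lam α G hℓ]
    exact (Submodule.equivMapOfInjective _ (powerChain_injective _ hℓ) _).finrank_eq.symm

end Lam

theorem stmt8_general {s ℓ : ℕ} (G : Matrix (Fin s) (Fin s) ℂ) (α : ℂ)
    (hmult : (Matrix.charpoly G).rootMultiplicity α = ℓ) :
    Module.finrank ℂ (LinearMap.ker (Matrix.mulVecLin (Lam ℓ s α G))) = ℓ := by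
  rw [finrank_ker_mulVecLin_Lam, ker_mulVecLin_smul_one_sub_pow, ← hmult, ← charpoly_toLin',
    Module.End.genEigenspace_rootMultiplicity_eq_maxGenEigenspace,
    LinearMap.finrank_maxGenEigenspace_eq]

/-- If `α` is an eigenvalue of `G` of algebraic multiplicity `ℓ`, then the
kernel of the block bidiagonal matrix `Λ` has dimension `ℓ`. -/
theorem stmt8 {s ℓ : ℕ} (G : Matrix (Fin s) (Fin s) ℂ) (α : ℂ)
    (hroot : (Matrix.charpoly G).IsRoot α)
    (hmult : (Matrix.charpoly G).rootMultiplicity α = ℓ) :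
    Module.finrank ℂ (LinearMap.ker (Matrix.mulVecLin (Lam ℓ s α G))) = ℓ :=
  stmt8_general G α hmult
end

section
/- Let L(z,w) = F₁(w)(wI − G) + F₂(wI − G)² and fix an eigenvalue α of G such that M := F₁(α) + F₂(αI − G) is invertible. Define the block matrix Λ^L with diagonal blocks L(α) := L(z,α), superdiagonal blocks −F₁(α), second superdiagonal blocks −F₂, and the block matrix Λ^G with diagonal blocks αI − G and superdiagonal blocks −I (both of block size ℓ×ℓ). Then Ker Λ^L = Ker Λ^G. -/
open Matrix

/-- `Ker Λ^L = Ker Λ^G`: the two block banded matrices built from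
`L(w) = F₁(w)(wI − G) + F₂(wI − G)²` at an eigenvalue `α` of `G` (for which
`F₁(α) + F₂(αI − G)` is invertible) have the same kernel. -/
theorem stmt10 {s ℓ : ℕ} (G F₂ : Matrix (Fin s) (Fin s) ℂ)
    (F₁ : ℂ → Matrix (Fin s) (Fin s) ℂ)
    (L : ℂ → Matrix (Fin s) (Fin s) ℂ)
    (hL : ∀ w : ℂ, L w = F₁ w * (w • (1 : Matrix (Fin s) (Fin s) ℂ) - G) +
      F₂ * (w • (1 : Matrix (Fin s) (Fin s) ℂ) - G) ^ 2)
    (α : ℂ) (heig : ∃ v : Fin s → ℂ, v ≠ 0 ∧ G.mulVec v = α • v)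
    (hinv : IsUnit (F₁ α + F₂ * (α • (1 : Matrix (Fin s) (Fin s) ℂ) - G)))
    (ΛL ΛG : Matrix (Fin ℓ × Fin s) (Fin ℓ × Fin s) ℂ)
    (hΛL : ∀ p q, ΛL p q =
      if (p.1 : ℕ) = (q.1 : ℕ) then L α p.2 q.2
      else if (p.1 : ℕ) + 1 = (q.1 : ℕ) then (-(F₁ α)) p.2 q.2
      else if (p.1 : ℕ) + 2 = (q.1 : ℕ) then (-F₂) p.2 q.2
      else 0)
    (hΛG : ∀ p q, ΛG p q =
      if (p.1 : ℕ) = (q.1 : ℕ) then (α • (1 : Matrix (Fin s) (Fin s) ℂ) - G) p.2 q.2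
      else if (p.1 : ℕ) + 1 = (q.1 : ℕ) then (-(1 : Matrix (Fin s) (Fin s) ℂ)) p.2 q.2
      else 0) :
    LinearMap.ker ΛL.mulVecLin = LinearMap.ker ΛG.mulVecLin := by
  classical
  set A := α • (1 : Matrix (Fin s) (Fin s) ℂ) - G with hA
  set M := F₁ α + F₂ * A with hM
  have hLα : L α = M * A := by
    rw [hL α, hM, add_mul, mul_assoc, ← sq]
  obtain ⟨N, hNM⟩ : ∃ N : Matrix (Fin s) (Fin s) ℂ, N * M = 1 := by
    have h1 := hinv.unit.inv_mul
    rw [hinv.unit_spec] at h1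
    exact ⟨_, h1⟩
  have cancel : ∀ v w : Fin s → ℂ, M *ᵥ v = M *ᵥ w → v = w := by
    intro v w h
    have h2 := congrArg (fun z => N *ᵥ z) h
    simpa [Matrix.mulVec_mulVec, hNM, Matrix.one_mulVec] using h2
  ext x
  simp only [LinearMap.mem_ker, Matrix.mulVecLin_apply]
  set y : ℕ → Fin s → ℂ := fun n => if h : n < ℓ then (fun m => x (⟨n, h⟩, m)) else 0 with hy
  have hy0 : ∀ n, ℓ ≤ n → y n = 0 := by
    intro n hn; simp [hy, Nat.not_lt.mpr hn]
  have sing : ∀ (n : ℕ) (E : Matrix (Fin s) (Fin s) ℂ) (j : Fin s),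
      (∑ k : Fin ℓ, ∑ m : Fin s, (if n = (k : ℕ) then E j m * x (k, m) else 0))
        = (E *ᵥ y n) j := by
    intro n E j
    by_cases h : n < ℓ
    · rw [Finset.sum_eq_single (⟨n, h⟩ : Fin ℓ)]
      · simp [Matrix.mulVec, dotProduct, hy, h]
      · intro k _ hk
        have hne : ¬ (n = (k : ℕ)) := fun he => hk (by ext; simp [← he])
        simp [hne]
      · simp
    · have h1 : ∀ k : Fin ℓ, ¬ (n = (k : ℕ)) := fun k he => h (he ▸ k.2)
      simp [h1, hy, h]
  have row : ∀ (Λ : Matrix (Fin ℓ × Fin s) (Fin ℓ × Fin s) ℂ)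
      (B C D : Matrix (Fin s) (Fin s) ℂ),
      (∀ p q, Λ p q =
        if (p.1 : ℕ) = (q.1 : ℕ) then B p.2 q.2
        else if (p.1 : ℕ) + 1 = (q.1 : ℕ) then C p.2 q.2
        else if (p.1 : ℕ) + 2 = (q.1 : ℕ) then D p.2 q.2
        else 0) →
      ∀ (i : Fin ℓ) (j : Fin s),
      (Λ *ᵥ x) (i, j) = (B *ᵥ y ↑i) j + (C *ᵥ y (↑i + 1)) j + (D *ᵥ y (↑i + 2)) j := by
    intro Λ B C D hΛ i j
    have h0 : (Λ *ᵥ x) (i, j) = ∑ k : Fin ℓ, ∑ m : Fin s, Λ (i, j) (k, m) * x (k, m) := by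
      simp [Matrix.mulVec, dotProduct, Fintype.sum_prod_type]
    rw [h0]
    have expand : ∀ (k : Fin ℓ) (m : Fin s), Λ (i, j) (k, m) * x (k, m) =
        (if (i : ℕ) = (k : ℕ) then B j m * x (k, m) else 0)
        + (if (i : ℕ) + 1 = (k : ℕ) then C j m * x (k, m) else 0)
        + (if (i : ℕ) + 2 = (k : ℕ) then D j m * x (k, m) else 0) := by
      intro k m
      rw [hΛ]
      dsimp only
      split_ifs <;> first | ring1 | (exfalso; omega)
    simp only [expand, Finset.sum_add_distrib]
    rw [sing, sing, sing]
  have rowG' : ∀ p q, ΛG p q =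
      if (p.1 : ℕ) = (q.1 : ℕ) then A p.2 q.2
      else if (p.1 : ℕ) + 1 = (q.1 : ℕ) then (-(1 : Matrix (Fin s) (Fin s) ℂ)) p.2 q.2
      else if (p.1 : ℕ) + 2 = (q.1 : ℕ) then (0 : Matrix (Fin s) (Fin s) ℂ) p.2 q.2
      else 0 := by
    intro p q
    rw [hΛG]
    split_ifs <;> simp
  have rowsG := row ΛG A (-(1 : Matrix (Fin s) (Fin s) ℂ)) 0 rowG'
  have rowsL := row ΛL (L α) (-(F₁ α)) (-F₂) hΛL
  -- the intermediate condition
  have hL_of_P : (∀ n, A *ᵥ y n = y (n + 1)) →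
      ∀ n, (L α) *ᵥ y n = F₁ α *ᵥ y (n + 1) + F₂ *ᵥ y (n + 2) := by
    intro hP n
    rw [hLα, ← Matrix.mulVec_mulVec, hP n, hM, Matrix.add_mulVec,
      ← Matrix.mulVec_mulVec, hP (n + 1)]
  have hG_of_P : (∀ n, A *ᵥ y n = y (n + 1)) → ΛG *ᵥ x = 0 := by
    intro hP
    funext p
    obtain ⟨i, j⟩ := p
    rw [Pi.zero_apply, rowsG i j, hP ↑i]
    simp [Matrix.neg_mulVec, Matrix.one_mulVec]
  have hP_of_G : ΛG *ᵥ x = 0 → ∀ n, A *ᵥ y n = y (n + 1) := by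
    intro hx n
    by_cases h : n < ℓ
    · funext j
      have h1 := congrFun hx (⟨n, h⟩, j)
      rw [rowsG ⟨n, h⟩ j] at h1
      simp only [Matrix.neg_mulVec, Matrix.one_mulVec, Matrix.zero_mulVec,
        Pi.neg_apply, Pi.zero_apply] at h1
      linear_combination h1
    · rw [hy0 n (by omega), hy0 (n + 1) (by omega), Matrix.mulVec_zero]
  constructor
  · intro hx
    have hrows : ∀ n : ℕ, (L α) *ᵥ y n = F₁ α *ᵥ y (n + 1) + F₂ *ᵥ y (n + 2) := by
      intro n
      by_cases h : n < ℓ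
      · funext j
        have h1 := congrFun hx (⟨n, h⟩, j)
        rw [rowsL ⟨n, h⟩ j] at h1
        simp only [Matrix.neg_mulVec, Pi.neg_apply, Pi.zero_apply] at h1
        simp only [Pi.add_apply]
        linear_combination h1
      · rw [hy0 n (by omega), hy0 (n + 1) (by omega), hy0 (n + 2) (by omega)]
        simp
    have key : ∀ d n, ℓ ≤ n + d → A *ᵥ y n = y (n + 1) := by
      intro d
      induction d with
      | zero =>
        intro n hn
        rw [hy0 n (by omega), hy0 (n + 1) (by omega), Matrix.mulVec_zero]
      | succ d ih =>
        intro n hn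
        by_cases h : ℓ ≤ n
        · rw [hy0 n h, hy0 (n + 1) (by omega), Matrix.mulVec_zero]
        · have h1 : A *ᵥ y (n + 1) = y (n + 2) := ih (n + 1) (by omega)
          apply cancel
          have h2 := hrows n
          rw [hLα, ← Matrix.mulVec_mulVec] at h2
          rw [h2, hM, Matrix.add_mulVec, ← Matrix.mulVec_mulVec, h1]
    exact hG_of_P (fun n => key ℓ n (by omega))
  · intro hx
    have hP := hP_of_G hx
    have hrows := hL_of_P hP
    funext p
    obtain ⟨i, j⟩ := p
    rw [Pi.zero_apply, rowsL i j]
    have h1 := congrFun (hrows ↑i) j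
    simp only [Pi.add_apply] at h1
    simp only [Matrix.neg_mulVec, Pi.neg_apply]
    linear_combination h1
end
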